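/- RUP soundness: if applying unit propagation to fixpoint on the constraint set D ∪ {¬C} yields a contradiction (some constraint is falsified under the propagated partial assignment), then D entails C over 0-1 assignments, where ¬C denotes the constraints forcing all literals of the clause C to be false. -/

import Mathlib

/-!
Every model of `D` that falsifies `C` extends the initial assignment `¬C`, and each
propagation step keeps this invariant, because a propagated literal can only be false in
assignments violating some constraint of `D`. Hence such a model extends the final
assignment, where some constraint of `D` is falsified: a contradiction.
-/

/-- A pseudo-Boolean constraint `Σ_{ℓ ∈ lits} w(ℓ)·ℓ ≥ deg` over literals (variable, polarity). -/
structure PBC (ι : Type*) where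
  lits : Finset (ι × Bool)
  w : ι × Bool → ℕ
  deg : ℕ

/-- Value of a literal under a total Boolean assignment. -/
def litEval {ι : Type*} (β : ι → Bool) (l : ι × Bool) : Bool :=
  if l.2 then β l.1 else !(β l.1)

/-- Negation of a literal. -/
def negLit {ι : Type*} (l : ι × Bool) : ι × Bool := (l.1, !l.2)

/-- Satisfaction of a PB constraint by a total assignment. -/
def satPBC {ι : Type*} (β : ι → Bool) (C : PBC ι) : Prop :=
  C.deg ≤ ∑ l ∈ C.lits.filter (fun l => litEval β l = true), C.w l

/-- A total assignment extends a partial assignment (a set of literals deemed true). -/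
def extendsAssign {ι : Type*} (β : ι → Bool) (α : Set (ι × Bool)) : Prop :=
  ∀ l ∈ α, litEval β l = true

/-- Constraint-driven unit propagation: some constraint of `D` propagates literal `ℓ`
under partial assignment `α`, i.e. setting `ℓ` false makes the restricted constraint
unsatisfiable. -/
def propagatesTo {ι : Type*} (D : Finset (PBC ι)) (α : Set (ι × Bool)) (ℓ : ι × Bool) : Prop :=
  ∃ C ∈ D, ∀ β : ι → Bool, extendsAssign β α → litEval β ℓ = false → ¬ satPBC β C

/-- `upSeq D α₀ L` holds when `L` is a valid sequence of unit propagations from `α₀`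
(the head of the list is propagated last). -/
def upSeq {ι : Type*} (D : Finset (PBC ι)) (α₀ : Set (ι × Bool)) : List (ι × Bool) → Prop
  | [] => True
  | ℓ :: L => upSeq D α₀ L ∧ propagatesTo D (α₀ ∪ {x | x ∈ L}) ℓ

section RUP

variable {ι : Type*} {D : Finset (PBC ι)} {β : ι → Bool}

lemma litEval_negLit (β : ι → Bool) (l : ι × Bool) : litEval β (negLit l) = !litEval β l := by
  obtain ⟨x, _ | _⟩ := l <;> simp [litEval, negLit]

lemma extendsAssign_negLit_of_forall_eq_false {C : Finset (ι × Bool)}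
    (h : ∀ l ∈ C, litEval β l = false) : extendsAssign β {l | ∃ c ∈ C, l = negLit c} := by
  rintro _ ⟨c, hc, rfl⟩
  simp [litEval_negLit, h c hc]

lemma propagatesTo.litEval_eq_true {α : Set (ι × Bool)} {ℓ : ι × Bool}
    (hprop : propagatesTo D α ℓ) (hD : ∀ P ∈ D, satPBC β P) (hα : extendsAssign β α) :
    litEval β ℓ = true := by
  obtain ⟨P, hP, hfals⟩ := hprop
  by_contra hℓ
  exact hfals β hα (Bool.eq_false_iff.mpr hℓ) (hD P hP)

lemma upSeq.extendsAssign {α₀ : Set (ι × Bool)} {L : List (ι × Bool)} (hL : upSeq D α₀ L)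
    (hD : ∀ P ∈ D, satPBC β P) (h₀ : extendsAssign β α₀) :
    extendsAssign β (α₀ ∪ {x | x ∈ L}) := by
  induction L with
  | nil => simpa [extendsAssign] using h₀
  | cons ℓ L ih =>
    obtain ⟨hL, hprop⟩ := hL
    have hext := ih hL
    have hℓ := hprop.litEval_eq_true hD hext
    rintro l (hl | hl)
    · exact hext l (Or.inl hl)
    · rcases List.mem_cons.mp hl with rfl | hl
      · exact hℓ
      · exact hext l (Or.inr hl)

end RUP

/-- RUP soundness: if unit propagation on `D ∪ {¬C}` (all literals of the clause `C`
set to false) reaches, along some propagation sequence `L`, a state in which some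
constraint of `D` is falsified, then `D` entails the clause `C` over 0-1 assignments. -/
theorem stmt19 {ι : Type*} (D : Finset (PBC ι)) (C : Finset (ι × Bool))
    (hrup : ∃ L : List (ι × Bool),
      upSeq D {l | ∃ c ∈ C, l = negLit c} L ∧
      ∃ C' ∈ D, ∀ β : ι → Bool,
        extendsAssign β ({l | ∃ c ∈ C, l = negLit c} ∪ {x | x ∈ L}) → ¬ satPBC β C') :
    ∀ β : ι → Bool, (∀ P ∈ D, satPBC β P) → ∃ l ∈ C, litEval β l = true := by
  intro β hD
  by_contra! hC
  obtain ⟨L, hL, C', hC', hfals⟩ := hrup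
  have h₀ := extendsAssign_negLit_of_forall_eq_false (by simpa using hC)
  exact hfals β (hL.extendsAssign hD h₀) (hD C' hC')
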